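/- arXiv:2208.02992 — 2 statements merged into one kernel-verified Lean document; each statement's English description precedes it below -/
import Mathlib

section
/- Let S be an offensive alliance in a finite simple graph G. Then every vertex v ∈ N(S) satisfies deg(v) ≤ 2|S| − 1. Consequently, no vertex of degree at least 2|S| belongs to N(S). -/
open scoped Classical
open Finset

variable {V : Type*}

/-- Number of neighbours of `v` inside `S`. -/
noncomputable def degOn (G : SimpleGraph V) (S : Finset V) (v : V) : ℕ :=
  (S.filter (fun u => G.Adj v u)).card

/-- Open neighbourhood of a set `S`: vertices outside `S` with a neighbour in `S`. -/
noncomputable def openNbhd (G : SimpleGraph V) [Fintype V] (S : Finset V) : Finset V :=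
  Finset.univ.filter (fun v => v ∉ S ∧ ∃ u ∈ S, G.Adj v u)

/-- `S` is an offensive alliance. -/
def IsOffensiveAlliance (G : SimpleGraph V) [Fintype V] (S : Finset V) : Prop :=
  S.Nonempty ∧ ∀ v ∈ openNbhd G S, degOn G S v ≥ degOn G Sᶜ v + 1

/-- `S` is a strong offensive alliance. -/
def IsStrongOffensiveAlliance (G : SimpleGraph V) [Fintype V] (S : Finset V) : Prop :=
  S.Nonempty ∧ ∀ v ∈ openNbhd G S, degOn G S v ≥ degOn G Sᶜ v + 2

/-- `C` is a vertex cover. -/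
def IsVertexCover (G : SimpleGraph V) (C : Finset V) : Prop :=
  ∀ u v, G.Adj u v → u ∈ C ∨ v ∈ C

theorem offensive_neighbor_degree_bound (G : SimpleGraph V) [Fintype V]
    (S : Finset V) (hS : IsOffensiveAlliance G S) :
    (∀ v ∈ openNbhd G S, G.degree v ≤ 2 * S.card - 1) ∧
    (∀ v : V, 2 * S.card ≤ G.degree v → v ∉ openNbhd G S) := by
  have key : ∀ v ∈ openNbhd G S, G.degree v ≤ 2 * S.card - 1 := by
    intro v hv
    have hdeg : G.degree v = degOn G S v + degOn G Sᶜ v := by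
      rw [← SimpleGraph.card_neighborFinset_eq_degree]
      unfold degOn
      rw [← Finset.card_union_of_disjoint]
      · congr 1
        ext u
        simp only [SimpleGraph.mem_neighborFinset, Finset.mem_union, Finset.mem_filter, Finset.mem_compl]
        tauto
      · exact Finset.disjoint_filter_filter (disjoint_compl_right)
    have h1 : degOn G S v ≤ S.card := Finset.card_filter_le _ _
    have h2 := hS.2 v hv
    have hpos : 1 ≤ degOn G S v := by omega
    omega
  refine ⟨key, fun v hdv hv => ?_⟩
  have := key v hv
  have hpos : 0 < S.card := Finset.card_pos.mpr hS.1
  omega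
end

section
/- Let G be a finite simple graph with at least one vertex. If C is any nonempty vertex cover of G, then G has an offensive alliance of size at most |C|. -/
open scoped Classical
open Finset

variable {V : Type*}

theorem offensive_le_vertexCover (G : SimpleGraph V) [Fintype V]
    (C : Finset V) (hne : C.Nonempty) (hC : IsVertexCover G C) :
    ∃ S : Finset V, IsOffensiveAlliance G S ∧ S.card ≤ C.card := by
  refine ⟨C, ⟨hne, ?_⟩, le_rfl⟩
  intro v hv
  simp only [openNbhd, Finset.mem_filter] at hv
  obtain ⟨-, hvC, u, huC, hadj⟩ := hv
  have h0 : degOn G Cᶜ v = 0 := by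
    simp only [degOn, Finset.card_eq_zero, Finset.filter_eq_empty_iff]
    intro w hw hadj'
    rcases hC v w hadj' with h | h
    · exact hvC h
    · exact (Finset.mem_compl.mp hw) h
  have h1 : 1 ≤ degOn G C v :=
    Finset.card_pos.mpr ⟨u, Finset.mem_filter.mpr ⟨huC, hadj⟩⟩
  omega
end
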